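/- Let X be a metric space and K ⊆ X. Assume K has finite linearly controlled dimension: there exist c̄ ∈ (0,1), s̄ > 0 and n̄ ∈ ℕ such that dim_N(K,c̄,s) ≤ n̄ for all 0 < s ≤ s̄. Assume furthermore that there exist n ∈ ℕ, c ∈ (0,1) and s₀ > 0 such that for every ε > 0 there exists λ_ε > 0 with the property: for every x ∈ K and every λ ≥ λ_ε there exist a pointed metric space (Y,⋆) satisfying dim_N(B_Y(⋆,1),c,s) ≤ n for all 0 < s < s₀, and an ε-coupling between (X, λd, x) and (Y,⋆). Then K has linearly controlled dimension at most n: there exist c' > 0 and t₀ > 0 such that dim_N(K,c',t) ≤ n for all 0 < t < t₀. -/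

import Mathlib

/-!
Rescaling by `λ ≈ 1/τ` and pulling back a Nagata cover of the unit ball of a tangent through
an `ε`-coupling shows that, uniformly for all small `τ`, every subset of a ball of radius
`r τ` centred in `K` has `dim_N(·, c/2, τ) ≤ n`. A cover witnessing `dim_N(K, c̄, s) ≤ n̄`
splits `K` into `n̄ + 1` layers of `s`-bounded, `c̄ s`-separated pieces; with
`b = min (c/2) c̄`, the `j`-th layer is covered piece by piece at scale `(b/8)^j s`, and the
layers are merged one at a time, every set of the new layer that comes close to a set of the
previous ones being attached to it. Each merge doubles the scale and multiplies the constant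
by `b/16`.
-/

open Metric Set

/-- The set `A` in a space with distance function `d` has Nagata dimension at most `n`
with constant `c` at scale `s` (written `dim_N(A,c,s) ≤ n` in the paper): there is a
cover `𝒰 = ⋃_{k=0}^n 𝒰 k` of `A` by subsets of `A`, each member having diameter at
most `s`, such that each family `𝒰 k` is `c*s`-separated. -/
def dimNle {X : Type*} (d : X → X → ℝ) (A : Set X) (c s : ℝ) (n : ℕ) : Prop :=
  ∃ 𝒰 : Fin (n + 1) → Set (Set X),
    (∀ k, ∀ U ∈ 𝒰 k, U ⊆ A) ∧
    (∀ p ∈ A, ∃ k, ∃ U ∈ 𝒰 k, p ∈ U) ∧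
    (∀ k, ∀ U ∈ 𝒰 k, ∀ a ∈ U, ∀ b ∈ U, d a b ≤ s) ∧
    (∀ k, ∀ U ∈ 𝒰 k, ∀ V ∈ 𝒰 k, U ≠ V → ∀ a ∈ U, ∀ b ∈ V, c * s ≤ d a b)

/-- `dimAle d A C Rbar β` (written `dim_A(A,C,Rbar) ≤ β` in the paper): for all
`0 < r < R < Rbar` and every `x ∈ A`, the ball of radius `R` around `x` in `A` can be
covered by at most `C * (R/r)^β` balls of radius `r` with centers in `A`. -/
def dimAle {X : Type*} (d : X → X → ℝ) (A : Set X) (C Rbar β : ℝ) : Prop :=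
  ∀ r R : ℝ, 0 < r → r < R → R < Rbar → ∀ x ∈ A,
    ∃ T : Finset X, ↑T ⊆ A ∧ (T.card : ℝ) ≤ C * (R / r) ^ β ∧
      ∀ z ∈ A, d z x < R → ∃ t ∈ T, d z t < r

/-- `d` is a metric distance function on `Y`: symmetric, triangle inequality, and
vanishing exactly on the diagonal. -/
def IsMetricDist {Y : Type*} (d : Y → Y → ℝ) : Prop :=
  (∀ a b, d a b = d b a) ∧ (∀ a b c, d a c ≤ d a b + d b c) ∧ (∀ a b, d a b = 0 ↔ a = b)

/-- An `ε`-coupling between the pointed spaces `(A, dA, a₀)` and `(B, dB, b₀)`: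
a pseudometric on the disjoint union extending `dA` and `dB`, with `d(a₀,b₀) ≤ ε`,
every point of `B_A(a₀,1/ε)` within distance `< ε` of a point of `B`, and every point
of `B_B(b₀,1/ε)` within distance `< ε` of a point of `A`. -/
def IsCoupling {A B : Type*} (dA : A → A → ℝ) (dB : B → B → ℝ) (a₀ : A) (b₀ : B)
    (ε : ℝ) (d : A ⊕ B → A ⊕ B → ℝ) : Prop :=
  (∀ p q, d p q = d q p) ∧
  (∀ p, d p p = 0) ∧
  (∀ p q r, d p r ≤ d p q + d q r) ∧
  (∀ u v : A, d (Sum.inl u) (Sum.inl v) = dA u v) ∧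
  (∀ u v : B, d (Sum.inr u) (Sum.inr v) = dB u v) ∧
  d (Sum.inl a₀) (Sum.inr b₀) ≤ ε ∧
  (∀ u : A, dA u a₀ < 1 / ε → ∃ v : B, d (Sum.inl u) (Sum.inr v) < ε) ∧
  (∀ v : B, dB v b₀ < 1 / ε → ∃ u : A, d (Sum.inl u) (Sum.inr v) < ε)

section NagataFamilies

variable {X : Type*}

structure IsBoundedSeparated (d : X → X → ℝ) (𝒰 : Set (Set X)) (D S : ℝ) : Prop where
  bounded : ∀ U ∈ 𝒰, ∀ a ∈ U, ∀ b ∈ U, d a b ≤ D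
  separated : 𝒰.Pairwise fun U V => ∀ a ∈ U, ∀ b ∈ V, S ≤ d a b

theorem dimNle_iff {d : X → X → ℝ} {A : Set X} {c s : ℝ} {n : ℕ} :
    dimNle d A c s n ↔ ∃ 𝒰 : Fin (n + 1) → Set (Set X), (∀ k, ∀ U ∈ 𝒰 k, U ⊆ A) ∧
      (∀ p ∈ A, ∃ k, ∃ U ∈ 𝒰 k, p ∈ U) ∧ ∀ k, IsBoundedSeparated d (𝒰 k) s (c * s) :=
  ⟨fun ⟨𝒰, hsub, hcov, hbdd, hsep⟩ => ⟨𝒰, hsub, hcov, fun k => ⟨hbdd k, hsep k⟩⟩,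
    fun ⟨𝒰, hsub, hcov, h⟩ => ⟨𝒰, hsub, hcov, fun k => (h k).bounded, fun k => (h k).separated⟩⟩

theorem dimNle_empty (d : X → X → ℝ) (c s : ℝ) (n : ℕ) : dimNle d ∅ c s n :=
  ⟨fun _ => ∅, by simp, by simp, by simp, by simp⟩

theorem IsBoundedSeparated.preimage {Y : Type*} {dX : X → X → ℝ} {dY : Y → Y → ℝ}
    {𝒱 : Set (Set Y)} {D S D' S' lam δ : ℝ} {A : Set X} {f : X → Y}
    (h : IsBoundedSeparated dY 𝒱 D S) (hlam : 0 < lam)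
    (hle : ∀ a ∈ A, ∀ b ∈ A, lam * dX a b ≤ dY (f a) (f b) + δ)
    (hge : ∀ a ∈ A, ∀ b ∈ A, dY (f a) (f b) ≤ lam * dX a b + δ)
    (hD : D + δ ≤ lam * D') (hS : lam * S' ≤ S - δ) :
    IsBoundedSeparated dX ((fun V => A ∩ f ⁻¹' V) '' 𝒱) D' S' where
  bounded := by
    rintro _ ⟨V, hV, rfl⟩ a ⟨ha, hfa⟩ b ⟨hb, hfb⟩
    have := h.bounded V hV _ hfa _ hfb
    nlinarith [hle a ha b hb]
  separated := by
    rintro _ ⟨V, hV, rfl⟩ _ ⟨V', hV', rfl⟩ hne a ⟨ha, hfa⟩ b ⟨hb, hfb⟩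
    have := h.separated hV hV' (fun hVV' => hne (hVV' ▸ rfl)) _ hfa _ hfb
    nlinarith [hge a ha b hb]

theorem dimNle_of_approx {Y : Type*} {dX : X → X → ℝ} {dY : Y → Y → ℝ} {A : Set X}
    {B : Set Y} {f : X → Y} {lam δ c s c' t : ℝ} {n : ℕ} (hf : MapsTo f A B) (hlam : 0 < lam)
    (hle : ∀ a ∈ A, ∀ b ∈ A, lam * dX a b ≤ dY (f a) (f b) + δ)
    (hge : ∀ a ∈ A, ∀ b ∈ A, dY (f a) (f b) ≤ lam * dX a b + δ)
    (hB : dimNle dY B c s n) (ht : s + δ ≤ lam * t) (hc' : lam * (c' * t) ≤ c * s - δ) :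
    dimNle dX A c' t n := by
  obtain ⟨𝒱, -, hcov, h𝒱⟩ := dimNle_iff.mp hB
  refine dimNle_iff.mpr ⟨fun k => (fun V => A ∩ f ⁻¹' V) '' 𝒱 k, ?_, ?_,
    fun k => (h𝒱 k).preimage hlam hle hge ht hc'⟩
  · rintro k _ ⟨V, -, rfl⟩
    exact inter_subset_left
  · intro p hp
    obtain ⟨k, V, hV, hpV⟩ := hcov (f p) (hf hp)
    exact ⟨k, _, mem_image_of_mem _ hV, hp, hpV⟩

theorem dimNle_sUnion {d : X → X → ℝ} {𝒰 : Set (Set X)} {c c₁ S τ : ℝ} {n : ℕ}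
    (hsep : 𝒰.Pairwise fun U V => ∀ a ∈ U, ∀ b ∈ V, S ≤ d a b)
    (hloc : ∀ U ∈ 𝒰, dimNle d U c₁ τ n) (hτ : 0 ≤ τ) (hc₁ : c ≤ c₁) (hS : c * τ ≤ S) :
    dimNle d (⋃₀ 𝒰) c τ n := by
  choose! 𝒲 hsub hcov h𝒲 using fun U hU => dimNle_iff.mp (hloc U hU)
  refine dimNle_iff.mpr ⟨fun k => {W | ∃ U ∈ 𝒰, W ∈ 𝒲 U k}, ?_, ?_, fun k => ⟨?_, ?_⟩⟩
  · rintro k W ⟨U, hU, hW⟩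
    exact (hsub U hU k W hW).trans (subset_sUnion_of_mem hU)
  · rintro p ⟨U, hU, hpU⟩
    obtain ⟨k, W, hW, hpW⟩ := hcov U hU p hpU
    exact ⟨k, W, ⟨U, hU, hW⟩, hpW⟩
  · rintro W ⟨U, hU, hW⟩
    exact (h𝒲 U hU k).bounded W hW
  · rintro W ⟨U, hU, hW⟩ W' ⟨U', hU', hW'⟩ hne a ha b hb
    obtain rfl | hUU' := eq_or_ne U U'
    · calc c * τ ≤ c₁ * τ := mul_le_mul_of_nonneg_right hc₁ hτ
        _ ≤ d a b := (h𝒲 U hU k).separated hW hW' hne a ha b hb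
    · exact hS.trans (hsep hU hU' hUU' a (hsub U hU k W hW ha) b (hsub U' hU' k W' hW' hb))

end NagataFamilies

section Gluing

variable {X : Type*} [MetricSpace X]

def attachNear (𝒰 𝒱 : Set (Set X)) (γ : ℝ) : Set (Set X) :=
  (fun U => U ∪ ⋃₀ {V ∈ 𝒱 | ∃ u ∈ U, ∃ v ∈ V, dist u v < γ}) '' 𝒰 ∪
    {V ∈ 𝒱 | ∀ U ∈ 𝒰, ∀ u ∈ U, ∀ v ∈ V, γ ≤ dist u v}

variable {𝒰 𝒱 : Set (Set X)} {D S δ β γ : ℝ}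

theorem exists_dist_le_of_mem_attachNear (h𝒱 : IsBoundedSeparated dist 𝒱 δ β) (hδγ : 0 ≤ δ + γ)
    {U : Set X} {p : X} (hp : p ∈ U ∪ ⋃₀ {V ∈ 𝒱 | ∃ u ∈ U, ∃ v ∈ V, dist u v < γ}) :
    ∃ u ∈ U, dist p u ≤ δ + γ := by
  rcases hp with hp | ⟨V, ⟨hV, u, hu, v, hv, huv⟩, hpV⟩
  · exact ⟨p, hp, by rwa [dist_self]⟩
  · refine ⟨u, hu, ?_⟩
    calc dist p u ≤ dist p v + dist v u := dist_triangle _ _ _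
      _ ≤ δ + γ := by rw [dist_comm v u]; linarith [h𝒱.bounded V hV p hpV v hv]

theorem IsBoundedSeparated.attachNear {D' S' : ℝ} (h𝒰 : IsBoundedSeparated dist 𝒰 D S)
    (h𝒱 : IsBoundedSeparated dist 𝒱 δ β) (hδγ : 0 ≤ δ + γ) (hD : D + 2 * (δ + γ) ≤ D')
    (hδ : δ ≤ D') (hS : S' + 2 * (δ + γ) ≤ S) (hγ : S' ≤ γ) (hβ : S' ≤ β) :
    IsBoundedSeparated dist (attachNear 𝒰 𝒱 γ) D' S' := by
  have mixed : ∀ U ∈ 𝒰, ∀ V₀ ∈ {V ∈ 𝒱 | ∀ U ∈ 𝒰, ∀ u ∈ U, ∀ v ∈ V, γ ≤ dist u v},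
      ∀ p ∈ U ∪ ⋃₀ {V ∈ 𝒱 | ∃ u ∈ U, ∃ v ∈ V, dist u v < γ}, ∀ q ∈ V₀, S' ≤ dist p q := by
    rintro U hU V₀ ⟨hV₀, hfar⟩ p (hp | ⟨V, ⟨hV, u, hu, v, hv, huv⟩, hpV⟩) q hq
    · exact hγ.trans (hfar U hU p hp q hq)
    · refine hβ.trans (h𝒱.separated hV hV₀ ?_ p hpV q hq)
      rintro rfl
      exact (hfar U hU u hu v hv).not_gt huv
  constructor
  · rintro _ (⟨U, hU, rfl⟩ | ⟨hV, -⟩) p hp q hq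
    · obtain ⟨u, hu, hpu⟩ := exists_dist_le_of_mem_attachNear h𝒱 hδγ hp
      obtain ⟨v, hv, hqv⟩ := exists_dist_le_of_mem_attachNear h𝒱 hδγ hq
      calc dist p q ≤ dist p u + dist u v + dist v q := dist_triangle4 _ _ _ _
        _ ≤ D' := by rw [dist_comm v q]; linarith [h𝒰.bounded U hU u hu v hv]
    · exact (h𝒱.bounded _ hV p hp q hq).trans hδ
  · rintro _ (⟨U, hU, rfl⟩ | hW) _ (⟨U', hU', rfl⟩ | hW') hne p hp q hq
    · obtain ⟨u, hu, hpu⟩ := exists_dist_le_of_mem_attachNear h𝒱 hδγ hp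
      obtain ⟨v, hv, hqv⟩ := exists_dist_le_of_mem_attachNear h𝒱 hδγ hq
      have huv := h𝒰.separated hU hU' (fun h => hne (h ▸ rfl)) u hu v hv
      have := dist_triangle4 u p q v
      rw [dist_comm u p] at this
      linarith
    · exact mixed U hU _ hW' p hp q hq
    · rw [dist_comm]
      exact mixed U' hU' _ hW q hq p hp
    · exact hβ.trans (h𝒱.separated hW.1 hW'.1 hne p hp q hq)

theorem dimNle_union {A B : Set X} {a b σ : ℝ} {n : ℕ} (ha : 0 < a) (ha₁ : a ≤ 1)
    (hb₁ : b ≤ 1) (hσ : 0 ≤ σ) (hA : dimNle dist A a σ n)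
    (hB : dimNle dist B b (a * σ / 8) n) :
    dimNle dist (A ∪ B) (a * b / 16) (2 * σ) n := by
  obtain ⟨𝒰, hsub𝒰, hcov𝒰, h𝒰⟩ := dimNle_iff.mp hA
  obtain ⟨𝒱, hsub𝒱, hcov𝒱, h𝒱⟩ := dimNle_iff.mp hB
  have haσ : 0 ≤ a * σ := by positivity
  refine dimNle_iff.mpr ⟨fun k => attachNear (𝒰 k) (𝒱 k) (a * σ / 4), ?_, ?_, fun k =>
    (h𝒰 k).attachNear (h𝒱 k) (by positivity) ?_ ?_ ?_ ?_ ?_⟩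
  · rintro k _ (⟨U, hU, rfl⟩ | ⟨hV, -⟩)
    · exact union_subset_union (hsub𝒰 k U hU)
        (sUnion_subset fun V hV => hsub𝒱 k V hV.1)
    · exact (hsub𝒱 k _ hV).trans subset_union_right
  · rintro p (hp | hp)
    · obtain ⟨k, U, hU, hpU⟩ := hcov𝒰 p hp
      exact ⟨k, _, Or.inl ⟨U, hU, rfl⟩, Or.inl hpU⟩
    · obtain ⟨k, V, hV, hpV⟩ := hcov𝒱 p hp
      by_cases hnear : ∃ U ∈ 𝒰 k, ∃ u ∈ U, ∃ v ∈ V, dist u v < a * σ / 4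
      · obtain ⟨U, hU, hUV⟩ := hnear
        exact ⟨k, _, Or.inl ⟨U, hU, rfl⟩, Or.inr ⟨V, ⟨hV, hUV⟩, hpV⟩⟩
      · push Not at hnear
        exact ⟨k, V, Or.inr ⟨hV, hnear⟩, hpV⟩
  all_goals nlinarith

theorem dimNle_biUnion_le {G : ℕ → Set X} {b s : ℝ} {n : ℕ} (hb : 0 < b) (hb₁ : b ≤ 1)
    (hs : 0 ≤ s) (m : ℕ) (hG : ∀ j ≤ m, dimNle dist (G j) b ((b / 8) ^ j * s) n) :
    dimNle dist (⋃ j ≤ m, G j) (b * (b / 16) ^ m) (2 ^ m * s) n := by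
  induction m with
  | zero => simpa using hG 0 le_rfl
  | succ m ih =>
    have hscale : b * (b / 16) ^ m * (2 ^ m * s) / 8 = (b / 8) ^ (m + 1) * s := by
      rw [pow_succ, div_pow, div_pow, show (16 : ℝ) ^ m = 8 ^ m * 2 ^ m by
        rw [← mul_pow]; norm_num]
      field_simp
    have hunion := dimNle_union (by positivity)
      (mul_le_one₀ hb₁ (by positivity) (pow_le_one₀ (by positivity) (by linarith))) hb₁
      (by positivity) (ih fun j hj => hG j (hj.trans m.le_succ))
      (hscale ▸ hG (m + 1) le_rfl)
    rw [biUnion_le_succ]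
    convert hunion using 1 <;> ring

open Fin.NatCast in
theorem dimNle_of_dimNle_closedBall {K : Set X} {cbar c₁ b s : ℝ}
    {nbar n : ℕ} (hb : 0 < b) (hb₁ : b ≤ 1) (hbc : b ≤ cbar) (hbc₁ : b ≤ c₁) (hs : 0 ≤ s)
    (hK : dimNle dist K cbar s nbar)
    (hloc : ∀ τ, (b / 8) ^ nbar * s ≤ τ → τ ≤ s → ∀ x ∈ K, ∀ A ⊆ closedBall x s,
      dimNle dist A c₁ τ n) :
    dimNle dist K (b * (b / 16) ^ nbar) (2 ^ nbar * s) n := by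
  obtain ⟨𝒰, hsub, hcov, h𝒰⟩ := dimNle_iff.mp hK
  have hK_eq : ⋃ j ≤ nbar, ⋃₀ 𝒰 (j : Fin (nbar + 1)) = K := by
    refine (iUnion₂_subset fun j _ => sUnion_subset fun U hU => hsub _ U hU).antisymm ?_
    intro p hp
    obtain ⟨k, U, hU, hpU⟩ := hcov p hp
    exact mem_iUnion₂.mpr ⟨k, k.is_le, U, by rwa [Fin.cast_val_eq_self], hpU⟩
  rw [← hK_eq]
  refine dimNle_biUnion_le hb hb₁ hs nbar fun j hj => ?_
  have hb8 : b / 8 ≤ 1 := by linarith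
  have hτs : (b / 8) ^ j * s ≤ s := mul_le_of_le_one_left hs (pow_le_one₀ (by positivity) hb8)
  refine dimNle_sUnion (h𝒰 j).separated (fun U hU => ?_) (by positivity) hbc₁
    (mul_le_mul hbc hτs (by positivity) (hb.le.trans hbc))
  rcases U.eq_empty_or_nonempty with rfl | ⟨x, hx⟩
  · exact dimNle_empty _ _ _ _
  · exact hloc _ (mul_le_mul_of_nonneg_right (pow_le_pow_of_le_one (by positivity) hb8 hj) hs)
      hτs x (hsub _ U hU hx) U fun p hp => (h𝒰 j).bounded U hU p hp x hx

end Gluing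

theorem IsCoupling.abs_sub_le {A B : Type*} {dA : A → A → ℝ} {dB : B → B → ℝ} {a₀ : A}
    {b₀ : B} {ε : ℝ} {d : A ⊕ B → A ⊕ B → ℝ} (h : IsCoupling dA dB a₀ b₀ ε d) {u v : A}
    {u' v' : B} {δ₁ δ₂ : ℝ} (hu : d (.inl u) (.inr u') ≤ δ₁) (hv : d (.inl v) (.inr v') ≤ δ₂) :
    |dA u v - dB u' v'| ≤ δ₁ + δ₂ := by
  obtain ⟨hsymm, -, htri, hA, hB, -⟩ := h
  rw [← hA, ← hB, abs_sub_le_iff]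
  constructor
  · linarith [htri (.inl u) (.inr u') (.inl v), htri (.inr u') (.inr v') (.inl v),
      hsymm (.inl v) (.inr v')]
  · linarith [htri (.inr u') (.inl u) (.inr v'), htri (.inl u) (.inl v) (.inr v'),
      hsymm (.inl u) (.inr u')]

theorem IsCoupling.exists_near_map {A B : Type*} {dA : A → A → ℝ} {dB : B → B → ℝ} {a₀ : A}
    {b₀ : B} {ε : ℝ} {d : A ⊕ B → A ⊕ B → ℝ} (h : IsCoupling dA dB a₀ b₀ ε d) :
    ∃ f : A → B, ∀ u, dA u a₀ < 1 / ε → d (.inl u) (.inr (f u)) < ε := by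
  classical
  obtain ⟨-, -, -, -, -, -, hnear, -⟩ := h
  exact ⟨fun u => if hu : dA u a₀ < 1 / ε then (hnear u hu).choose else b₀,
    fun u hu => by simpa only [dif_pos hu] using (hnear u hu).choose_spec⟩

universe u

theorem dimNle_closedBall_of_tangents {X : Type*} [MetricSpace X] {K : Set X} {n : ℕ}
    {c s₀ r : ℝ} (hc : c ∈ Ioo (0 : ℝ) 1) (hs₀ : 0 < s₀) (hr : 1 ≤ r)
    (htan : ∀ ε : ℝ, 0 < ε → ∃ lε : ℝ, 0 < lε ∧ ∀ x ∈ K, ∀ lam : ℝ, lε ≤ lam →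
      ∃ (Y : Type u) (dY : Y → Y → ℝ) (y : Y) (d : X ⊕ Y → X ⊕ Y → ℝ),
        IsMetricDist dY ∧
        (∀ s : ℝ, 0 < s → s < s₀ → dimNle dY {z : Y | dY z y < 1} c s n) ∧
        IsCoupling (fun a b : X => lam * dist a b) dY x y ε d) :
    ∃ t₁ > 0, ∀ τ, 0 < τ → τ < t₁ → ∀ x ∈ K, ∀ A ⊆ closedBall x (r * τ),
      dimNle dist A (c / 2) τ n := by
  obtain ⟨hc0, hc1⟩ := hc
  -- `r s ≤ 1/4` keeps the rescaled ball `B(x, r τ)` well inside the unit ball of the tangent,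
  -- and `ε = c s / 8` keeps the separation `c s - 2 ε` above `(c / 2) (s + 2 ε)`.
  set s := min (s₀ / 2) (1 / (4 * r))
  have hs : 0 < s := lt_min (by linarith) (by positivity)
  have hss₀ : s < s₀ := (min_le_left _ _).trans_lt (by linarith)
  have hrs : r * s ≤ 1 / 4 := by
    calc r * s ≤ r * (1 / (4 * r)) := mul_le_mul_of_nonneg_left (min_le_right _ _) (by linarith)
      _ = 1 / 4 := by field_simp
  set ε := c * s / 8 with hε_def
  have hε : 0 < ε := by positivity
  have hεs : ε ≤ s / 8 := by rw [hε_def]; nlinarith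
  have hball : r * (s + 2 * ε) + 2 * ε < 1 := by
    nlinarith [mul_le_mul_of_nonneg_left hεs (zero_le_one.trans hr)]
  obtain ⟨l, hl, hcoup⟩ := htan ε hε
  refine ⟨(s + 2 * ε) / l, by positivity, fun τ hτ hτl x hx A hA => ?_⟩
  set lam := (s + 2 * ε) / τ
  have hlam : 0 < lam := by positivity
  have hlamτ : lam * τ = s + 2 * ε := div_mul_cancel₀ _ hτ.ne'
  have hl_le : l ≤ lam := (lt_div_comm₀ hτ hl |>.mp hτl).le
  obtain ⟨Y, dY, y, d, -, hdimY, hd⟩ := hcoup x hx lam hl_le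
  obtain ⟨f, hf⟩ := hd.exists_near_map
  have hAx : ∀ z ∈ A, lam * dist z x ≤ r * (s + 2 * ε) := fun z hz => by
    rw [← hlamτ, mul_left_comm]
    exact mul_le_mul_of_nonneg_left (hA hz) hlam.le
  have hε1 : 1 < 1 / ε := by rw [lt_div_iff₀ hε]; nlinarith
  have hnear : ∀ z ∈ A, d (.inl z) (.inr (f z)) ≤ ε := fun z hz =>
    (hf z (by linarith [hAx z hz])).le
  have happrox : ∀ a ∈ A, ∀ b ∈ A, |lam * dist a b - dY (f a) (f b)| ≤ 2 * ε :=
    fun a ha b hb => two_mul ε ▸ hd.abs_sub_le (hnear a ha) (hnear b hb)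
  refine dimNle_of_approx (B := {z | dY z y < 1}) (δ := 2 * ε) (fun z hz => ?_) hlam
    (fun a ha b hb => by linarith [abs_sub_le_iff.mp (happrox a ha b hb)])
    (fun a ha b hb => by linarith [abs_sub_le_iff.mp (happrox a ha b hb)])
    (hdimY s hs hss₀) hlamτ.ge (by
      rw [mul_left_comm, hlamτ, hε_def]; nlinarith [mul_pos (mul_pos hc0 hs) (sub_pos.mpr hc1)])
  have hcentre := abs_sub_le_iff.mp (hd.abs_sub_le (hnear z hz) hd.2.2.2.2.2.1)
  show dY (f z) y < 1
  linarith [hAx z hz, hcentre.2]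

/-- If `K ⊆ X` has finite linearly controlled dimension and the
convergence of `X` to its tangents is uniform on `K`, the tangents having
`dim_N(B_Y(⋆,1),c,s) ≤ n` for all `0 < s < s₀` with constants `c, s₀` independent of
the point and the tangent, then `K` has linearly controlled dimension at most `n`. -/
theorem lc_dim_from_uniform_tangents {X : Type*} [MetricSpace X] (K : Set X)
    (cbar sbar : ℝ) (nbar : ℕ) (hcbar : cbar ∈ Set.Ioo (0:ℝ) 1) (hsbar : 0 < sbar)
    (hK : ∀ s : ℝ, 0 < s → s ≤ sbar → dimNle (fun a b : X => dist a b) K cbar s nbar)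
    (n : ℕ) (c s₀ : ℝ) (hc : c ∈ Set.Ioo (0:ℝ) 1) (hs₀ : 0 < s₀)
    (htan : ∀ ε : ℝ, 0 < ε → ∃ lε : ℝ, 0 < lε ∧ ∀ x ∈ K, ∀ lam : ℝ, lε ≤ lam →
      ∃ (Y : Type u) (dY : Y → Y → ℝ) (y : Y) (d : X ⊕ Y → X ⊕ Y → ℝ),
        IsMetricDist dY ∧
        (∀ s : ℝ, 0 < s → s < s₀ → dimNle dY {z : Y | dY z y < 1} c s n) ∧
        IsCoupling (fun a b : X => lam * dist a b) dY x y ε d) :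
    ∃ c' t₀ : ℝ, 0 < c' ∧ 0 < t₀ ∧ ∀ t : ℝ, 0 < t → t < t₀ →
      dimNle (fun a b : X => dist a b) K c' t n := by
  set b := min (c / 2) cbar
  have hb : 0 < b := lt_min (by linarith [hc.1]) hcbar.1
  have hb₁ : b ≤ 1 := (min_le_left _ _).trans (by linarith [hc.2])
  obtain ⟨t₁, ht₁, hloc⟩ := dimNle_closedBall_of_tangents (r := (8 / b) ^ nbar) hc hs₀
    (one_le_pow₀ ((one_le_div₀ hb).mpr (by linarith))) htan
  refine ⟨b * (b / 16) ^ nbar, 2 ^ nbar * min sbar t₁, by positivity, by positivity,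
    fun t ht htt₀ => ?_⟩
  have hs : t / 2 ^ nbar < min sbar t₁ := (div_lt_iff₀' (by positivity)).mpr htt₀
  rw [← mul_div_cancel₀ t (pow_ne_zero nbar two_ne_zero)]
  refine dimNle_of_dimNle_closedBall hb hb₁ (min_le_right _ _) (min_le_left _ _) (by positivity)
    (hK _ (by positivity) (hs.le.trans (min_le_left _ _))) fun τ hτ hτs x hx A hA => ?_
  refine hloc τ ((by positivity : (0 : ℝ) < _).trans_le hτ)
    (hτs.trans_lt (hs.trans_le (min_le_right _ _))) x hx A
    (hA.trans (closedBall_subset_closedBall ?_))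
  calc t / 2 ^ nbar
      _ = (8 / b) ^ nbar * ((b / 8) ^ nbar * (t / 2 ^ nbar)) := by
        rw [← mul_assoc, ← mul_pow, div_mul_div_comm, mul_comm 8 b, div_self (by positivity),
          one_pow, one_mul]
      _ ≤ (8 / b) ^ nbar * τ := by gcongr
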